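/- Soundness of the calculus LHS⁻: every formula φ of L⁻ that is derivable in the Hilbert system LHS⁻ is valid in all LHS models (under the two-dimensional semantics evaluating formulas at pairs of states). -/

import Mathlib

inductive LHSForm : Type
  | pl : ℕ → LHSForm
  | pr : ℕ → LHSForm
  | I : LHSForm
  | neg : LHSForm → LHSForm
  | and : LHSForm → LHSForm → LHSForm
  | box : LHSForm → LHSForm
  | bbox : LHSForm → LHSForm
  deriving DecidableEq

def LHSForm.or (φ ψ : LHSForm) : LHSForm := .neg (.and φ.neg ψ.neg)
def LHSForm.imp (φ ψ : LHSForm) : LHSForm := .neg (.and φ ψ.neg)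
def LHSForm.iff (φ ψ : LHSForm) : LHSForm := .and (φ.imp ψ) (ψ.imp φ)
def LHSForm.dia (φ : LHSForm) : LHSForm := .neg (.box φ.neg)
def LHSForm.bdia (φ : LHSForm) : LHSForm := .neg (.bbox φ.neg)

structure LHSModel where
  W : Type
  R : W → W → Prop
  Vl : ℕ → W → Prop
  Vr : ℕ → W → Prop

def LHSModel.sat (M : LHSModel) : M.W → M.W → LHSForm → Prop
  | s, _, .pl i => M.Vl i s
  | _, t, .pr i => M.Vr i t
  | s, t, .I => s = t
  | s, t, .neg φ => ¬ M.sat s t φ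
  | s, t, .and φ ψ => M.sat s t φ ∧ M.sat s t ψ
  | s, t, .box φ => ∀ s', M.R s s' → M.sat s' t φ
  | s, t, .bbox φ => ∀ t', M.R t t' → M.sat s t' φ

/-- The left fragment L_□: only left variables, ¬, ∧, □. -/
inductive IsLeft : LHSForm → Prop
  | pl (i : ℕ) : IsLeft (.pl i)
  | neg {φ} : IsLeft φ → IsLeft φ.neg
  | and {φ ψ} : IsLeft φ → IsLeft ψ → IsLeft (φ.and ψ)
  | box {φ} : IsLeft φ → IsLeft φ.box

/-- The right fragment L_■: only right variables, ¬, ∧, ■. -/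
inductive IsRight : LHSForm → Prop
  | pr (i : ℕ) : IsRight (.pr i)
  | neg {φ} : IsRight φ → IsRight φ.neg
  | and {φ ψ} : IsRight φ → IsRight ψ → IsRight (φ.and ψ)
  | bbox {φ} : IsRight φ → IsRight φ.bbox

/-- Formulas of L⁻: no occurrence of the constant I. -/
inductive NoI : LHSForm → Prop
  | pl (i : ℕ) : NoI (.pl i)
  | pr (i : ℕ) : NoI (.pr i)
  | neg {φ} : NoI φ → NoI φ.neg
  | and {φ ψ} : NoI φ → NoI ψ → NoI (φ.and ψ)
  | box {φ} : NoI φ → NoI φ.box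
  | bbox {φ} : NoI φ → NoI φ.bbox

/-- One-dimensional Kripke satisfaction (□ and ■ both read as the box). -/
def LHSModel.sat1 (M : LHSModel) : M.W → LHSForm → Prop
  | w, .pl i => M.Vl i w
  | w, .pr i => M.Vr i w
  | _, .I => True
  | w, .neg φ => ¬ M.sat1 w φ
  | w, .and φ ψ => M.sat1 w φ ∧ M.sat1 w ψ
  | w, .box φ => ∀ v, M.R w v → M.sat1 v φ
  | w, .bbox φ => ∀ v, M.R w v → M.sat1 v φ

/-- Conjunction of a list of formulas (a tautology for the empty list). -/
def conjList : List LHSForm → LHSForm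
  | [] => (LHSForm.pl 0).imp (.pl 0)
  | [φ] => φ
  | φ :: ψ :: rest => φ.and (conjList (ψ :: rest))

/-- Disjunction of a list of formulas (a contradiction for the empty list). -/
def disjList : List LHSForm → LHSForm
  | [] => (LHSForm.pl 0).and (LHSForm.pl 0).neg
  | [φ] => φ
  | φ :: ψ :: rest => φ.or (disjList (ψ :: rest))


/-- Simultaneous substitution of left variables by `σl` and right variables by `σr`. -/
def LHSForm.subst (σl σr : ℕ → LHSForm) : LHSForm → LHSForm
  | .pl i => σl i
  | .pr i => σr i
  | .I => .I
  | .neg φ => (φ.subst σl σr).neg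
  | .and φ ψ => (φ.subst σl σr).and (ψ.subst σl σr)
  | .box φ => (φ.subst σl σr).box
  | .bbox φ => (φ.subst σl σr).bbox

/-- Atomic propositional variables. -/
def IsVarAtom (φ : LHSForm) : Prop := ∃ i, φ = .pl i ∨ φ = .pr i

/-- The Hilbert calculus LHS⁻. -/
inductive LHSProof : LHSForm → Prop
  | a1 {p q : LHSForm} : IsVarAtom p → IsVarAtom q → LHSProof (p.imp (q.imp p))
  | a2 {p q r : LHSForm} : IsVarAtom p → IsVarAtom q → IsVarAtom r →
      LHSProof ((p.imp (q.imp r)).imp ((p.imp q).imp (p.imp r)))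
  | a3 {p q : LHSForm} : IsVarAtom p → IsVarAtom q →
      LHSProof ((p.neg.imp q.neg).imp (q.imp p))
  | kbox (i j : ℕ) :
      LHSProof ((((LHSForm.pl i).imp (.pl j)).box).imp
        (((LHSForm.pl i).box).imp ((LHSForm.pl j).box)))
  | kbbox (i j : ℕ) :
      LHSProof ((((LHSForm.pr i).imp (.pr j)).bbox).imp
        (((LHSForm.pr i).bbox).imp ((LHSForm.pr j).bbox)))
  | rbox (i j : ℕ) :
      LHSProof ((((LHSForm.pl i).or (.pr j)).box).iff (((LHSForm.pl i).box).or (.pr j)))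
  | rbbox (i j : ℕ) :
      LHSProof ((((LHSForm.pl i).or (.pr j)).bbox).iff ((LHSForm.pl i).or ((LHSForm.pr j).bbox)))
  | sub {α : LHSForm} (σl σr : ℕ → LHSForm) : LHSProof α →
      (∀ i, IsLeft (σl i)) → (∀ i, IsRight (σr i)) → LHSProof (α.subst σl σr)
  | mp {α β : LHSForm} : LHSProof (α.imp β) → LHSProof α → LHSProof β
  | nec {α : LHSForm} : LHSProof α → LHSProof α.box
  | necb {α : LHSForm} : LHSProof α → LHSProof α.bbox

/-- φ is a clean CNF formula of the form ⋀ᵢ (ψᵢ ∨ γᵢ) with ψᵢ ∈ L_□, γᵢ ∈ L_■. -/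
def IsCleanCNF (φ : LHSForm) : Prop :=
  ∃ l : List (LHSForm × LHSForm), l ≠ [] ∧
    (∀ p ∈ l, IsLeft p.1 ∧ IsRight p.2) ∧
    φ = conjList (l.map fun p => p.1.or p.2)

/-- Purely propositional formulas (atoms, ¬, ∧). -/
inductive IsProp : LHSForm → Prop
  | pl (i : ℕ) : IsProp (.pl i)
  | pr (i : ℕ) : IsProp (.pr i)
  | neg {φ} : IsProp φ → IsProp φ.neg
  | and {φ ψ} : IsProp φ → IsProp ψ → IsProp (φ.and ψ)

/-- Clean formulas: substitution instances of propositional formulas by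
formulas of L_□ (for left variables) and of L_■ (for right variables). -/
def IsClean (φ : LHSForm) : Prop :=
  ∃ (α : LHSForm) (σl σr : ℕ → LHSForm), IsProp α ∧
    (∀ i, IsLeft (σl i)) ∧ (∀ i, IsRight (σr i)) ∧ φ = α.subst σl σr

/-
The axioms are valid by direct computation (for `R_□`, `p^r` does not depend on the
left coordinate, so it commutes with `□`; symmetrically for `R_■`), and modus ponens and
necessitation preserve validity. For substitution, a formula of `L_□` is evaluated only at the
left coordinate and one of `L_■` only at the right one, so substituting them for variables
amounts to evaluating the original formula in a model whose valuations are given by those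
formulas.
-/

namespace LHSModel

variable (M : LHSModel) {s t : M.W} {φ ψ : LHSForm}

@[simp] lemma sat_imp : M.sat s t (φ.imp ψ) ↔ (M.sat s t φ → M.sat s t ψ) := by
  simp only [LHSForm.imp, sat, not_and, not_not]

@[simp] lemma sat_or : M.sat s t (φ.or ψ) ↔ M.sat s t φ ∨ M.sat s t ψ := by
  simp only [LHSForm.or, sat, not_and, not_not]
  tauto

@[simp] lemma sat_iff : M.sat s t (φ.iff ψ) ↔ (M.sat s t φ ↔ M.sat s t ψ) := by
  simp only [LHSForm.iff, sat, sat_imp]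
  exact iff_iff_implies_and_implies.symm

def substModel (σl σr : ℕ → LHSForm) (s₀ t₀ : M.W) : LHSModel where
  W := M.W
  R := M.R
  Vl i w := M.sat w t₀ (σl i)
  Vr i w := M.sat s₀ w (σr i)

end LHSModel

open LHSModel

lemma IsLeft.sat_congr_right {φ : LHSForm} (h : IsLeft φ) (M : LHSModel) (s t t' : M.W) :
    M.sat s t φ ↔ M.sat s t' φ := by
  induction h generalizing s with
  | pl => rfl
  | neg _ ih => exact not_congr (ih s)
  | and _ _ ih₁ ih₂ => exact and_congr (ih₁ s) (ih₂ s)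
  | box _ ih => exact forall_congr' fun s' => imp_congr_right fun _ => ih s'

lemma IsRight.sat_congr_left {φ : LHSForm} (h : IsRight φ) (M : LHSModel) (s s' t : M.W) :
    M.sat s t φ ↔ M.sat s' t φ := by
  induction h generalizing t with
  | pr => rfl
  | neg _ ih => exact not_congr (ih t)
  | and _ _ ih₁ ih₂ => exact and_congr (ih₁ t) (ih₂ t)
  | bbox _ ih => exact forall_congr' fun t' => imp_congr_right fun _ => ih t'

lemma LHSModel.substModel_sat_iff (M : LHSModel) {σl σr : ℕ → LHSForm}
    (hl : ∀ i, IsLeft (σl i)) (hr : ∀ i, IsRight (σr i)) (s₀ t₀ : M.W) (α : LHSForm)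
    (s t : M.W) : (M.substModel σl σr s₀ t₀).sat s t α ↔ M.sat s t (α.subst σl σr) := by
  induction α generalizing s t with
  | pl i => exact (hl i).sat_congr_right M s t₀ t
  | pr i => exact (hr i).sat_congr_left M s₀ s t
  | I => rfl
  | neg _ ih => exact not_congr (ih s t)
  | and _ _ ih₁ ih₂ => exact and_congr (ih₁ s t) (ih₂ s t)
  | box _ ih => exact forall_congr' fun s' => imp_congr_right fun _ => ih s' t
  | bbox _ ih => exact forall_congr' fun t' => imp_congr_right fun _ => ih s t'

def LHSForm.Valid (φ : LHSForm) : Prop := ∀ (M : LHSModel) (s t : M.W), M.sat s t φ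

namespace LHSForm.Valid

lemma subst {α : LHSForm} (h : α.Valid) {σl σr : ℕ → LHSForm} (hl : ∀ i, IsLeft (σl i))
    (hr : ∀ i, IsRight (σr i)) : (α.subst σl σr).Valid := fun M s t =>
  (M.substModel_sat_iff hl hr s t α s t).mp (h (M.substModel σl σr s t) s t)

lemma mp {α β : LHSForm} (hαβ : (α.imp β).Valid) (hα : α.Valid) : β.Valid := fun M s t =>
  (M.sat_imp.mp (hαβ M s t)) (hα M s t)

lemma box {α : LHSForm} (h : α.Valid) : α.box.Valid := fun M _ t s' _ => h M s' t

lemma bbox {α : LHSForm} (h : α.Valid) : α.bbox.Valid := fun M s _ t' _ => h M s t'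

end LHSForm.Valid

lemma LHSProof.valid {φ : LHSForm} (h : LHSProof φ) : φ.Valid := by
  induction h with
  | a1 | a2 | a3 => intro M s t; simp only [sat_imp, sat]; tauto
  | kbox | kbbox =>
      intro M s t
      simp only [sat_imp, sat]
      exact fun h₁ h₂ w hw => h₁ w hw (h₂ w hw)
  | rbox _ j =>
      intro M s t
      simp only [sat_iff, sat_or, sat]
      by_cases hj : M.Vr j t <;> simp [hj]
  | rbbox i _ =>
      intro M s t
      simp only [sat_iff, sat_or, sat]
      by_cases hi : M.Vl i s <;> simp [hi]
  | sub _ _ _ hl hr ih => exact ih.subst hl hr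
  | mp _ _ ih₁ ih₂ => exact ih₁.mp ih₂
  | nec _ ih => exact ih.box
  | necb _ ih => exact ih.bbox

theorem LHSminus_soundness_general (φ : LHSForm) (h : LHSProof φ) :
    ∀ (M : LHSModel) (s t : M.W), M.sat s t φ :=
  h.valid

/-- Soundness of the calculus LHS⁻: every formula of L⁻ derivable in the
Hilbert system LHS⁻ is valid in all LHS models under the two-dimensional
semantics. -/
theorem LHSminus_soundness (φ : LHSForm) (hI : NoI φ) (h : LHSProof φ) :
    ∀ (M : LHSModel) (s t : M.W), M.sat s t φ :=
  LHSminus_soundness_general φ h
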